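/- arXiv:1307.8332 — 5 statements merged into one kernel-verified Lean document; each statement's English description precedes it below -/
import Mathlib

section
/- If (H₁, Q₁) and (H₂, Q₂) both solve the Neumann spectral problem, and Q₁ and Q₂ are both strictly positive on Θ, then H₁ = H₂. (Uniqueness of the principal eigenvalue among eigenvalues with positive eigenfunctions.) -/
/-!
The Wronskian `W = Q₁' Q₂ - Q₂' Q₁` vanishes at both ends of `Θ` by the Neumann conditions, so by
Rolle's theorem `W' = Q₁'' Q₂ - Q₂'' Q₁` vanishes at some interior point `c`. Multiplying by `α`
and using the two equations turns this into `(H₁ - H₂) Q₁(c) Q₂(c) = 0`, and positivity of the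
eigenfunctions forces `H₁ = H₂`.
-/

open Set

section Wronskian

variable {f g : ℝ → ℝ} {U : Set ℝ} {x : ℝ} {n : WithTop ℕ∞}

theorem ContDiffOn.hasDerivAt_of_isOpen (hf : ContDiffOn ℝ n f U) (hn : n ≠ 0) (hU : IsOpen U)
    (hx : x ∈ U) : HasDerivAt f (deriv f x) x :=
  ((hf.differentiableOn hn).differentiableAt (hU.mem_nhds hx)).hasDerivAt

theorem ContDiffOn.hasDerivAt_deriv_of_isOpen (hf : ContDiffOn ℝ n f U) (hn : 2 ≤ n)
    (hU : IsOpen U) (hx : x ∈ U) : HasDerivAt (deriv f) (deriv (deriv f) x) x :=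
  (hf.deriv_of_isOpen (m := 1) hU hn).hasDerivAt_of_isOpen one_ne_zero hU hx

theorem hasDerivAt_wronskian (hf : ContDiffOn ℝ 2 f U) (hg : ContDiffOn ℝ 2 g U) (hU : IsOpen U)
    (hx : x ∈ U) :
    HasDerivAt (fun t => deriv f t * g t - deriv g t * f t)
      (deriv (deriv f) x * g x - deriv (deriv g) x * f x) x :=
  (((hf.hasDerivAt_deriv_of_isOpen le_rfl hU hx).mul
      (hg.hasDerivAt_of_isOpen two_ne_zero hU hx)).sub
    ((hg.hasDerivAt_deriv_of_isOpen le_rfl hU hx).mul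
      (hf.hasDerivAt_of_isOpen two_ne_zero hU hx))).congr_deriv (by ring)

theorem exists_mem_Ioo_deriv_deriv_mul_eq_of_neumann {a b : ℝ} (hab : a < b) (hU : IsOpen U)
    (hsub : Icc a b ⊆ U) (hf : ContDiffOn ℝ 2 f U) (hg : ContDiffOn ℝ 2 g U)
    (hfa : deriv f a = 0) (hfb : deriv f b = 0) (hga : deriv g a = 0) (hgb : deriv g b = 0) :
    ∃ c ∈ Ioo a b, deriv (deriv f) c * g c = deriv (deriv g) c * f c := by
  have hW : ∀ x ∈ Icc a b, HasDerivAt (fun t => deriv f t * g t - deriv g t * f t)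
      (deriv (deriv f) x * g x - deriv (deriv g) x * f x) x :=
    fun x hx => hasDerivAt_wronskian hf hg hU (hsub hx)
  obtain ⟨c, hc, hWc⟩ := exists_hasDerivAt_eq_zero hab
    (fun x hx => (hW x hx).continuousAt.continuousWithinAt) (by simp [hfa, hfb, hga, hgb])
    (fun x hx => hW x (Ioo_subset_Icc_self hx))
  exact ⟨c, hc, sub_eq_zero.mp hWc⟩

end Wronskian

theorem stmt_3_general (θm θM α r H₁ H₂ : ℝ) (a Q₁ Q₂ : ℝ → ℝ)
    (hθ : θm < θM)
    (hQ₁reg : ∃ U : Set ℝ, IsOpen U ∧ Set.Icc θm θM ⊆ U ∧ ContDiffOn ℝ 2 Q₁ U)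
    (heq₁ : ∀ θ ∈ Set.Icc θm θM, α * deriv (deriv Q₁) θ + r * a θ * Q₁ θ = H₁ * Q₁ θ)
    (hbm₁ : deriv Q₁ θm = 0) (hbM₁ : deriv Q₁ θM = 0)
    (hpos₁ : ∀ θ ∈ Set.Icc θm θM, 0 < Q₁ θ)
    (hQ₂reg : ∃ U : Set ℝ, IsOpen U ∧ Set.Icc θm θM ⊆ U ∧ ContDiffOn ℝ 2 Q₂ U)
    (heq₂ : ∀ θ ∈ Set.Icc θm θM, α * deriv (deriv Q₂) θ + r * a θ * Q₂ θ = H₂ * Q₂ θ)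
    (hbm₂ : deriv Q₂ θm = 0) (hbM₂ : deriv Q₂ θM = 0)
    (hpos₂ : ∀ θ ∈ Set.Icc θm θM, 0 < Q₂ θ) :
    H₁ = H₂ := by
  obtain ⟨U₁, hU₁, hsub₁, hQ₁⟩ := hQ₁reg
  obtain ⟨U₂, hU₂, hsub₂, hQ₂⟩ := hQ₂reg
  obtain ⟨c, hc, hWc⟩ := exists_mem_Ioo_deriv_deriv_mul_eq_of_neumann hθ (hU₁.inter hU₂)
    (subset_inter hsub₁ hsub₂) (hQ₁.mono inter_subset_left) (hQ₂.mono inter_subset_right)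
    hbm₁ hbM₁ hbm₂ hbM₂
  have hc' : c ∈ Icc θm θM := Ioo_subset_Icc_self hc
  have hprod : (H₁ - H₂) * (Q₁ c * Q₂ c) = 0 := by
    linear_combination α * hWc - Q₂ c * heq₁ c hc' + Q₁ c * heq₂ c hc'
  have hpos : 0 < Q₁ c * Q₂ c := mul_pos (hpos₁ c hc') (hpos₂ c hc')
  exact sub_eq_zero.mp ((mul_eq_zero.mp hprod).resolve_right hpos.ne')

/-- If `(H₁, Q₁)` and `(H₂, Q₂)` both solve the Neumann spectral
problem on `Θ = [θm, θM]` with strictly positive eigenfunctions, then `H₁ = H₂`. -/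
theorem stmt_3 (θm θM α r H₁ H₂ : ℝ) (a Q₁ Q₂ : ℝ → ℝ)
    (hθ : θm < θM) (hα : 0 < α) (hr : 0 < r)
    (ha : ContinuousOn a (Set.Icc θm θM))
    (hQ₁reg : ∃ U : Set ℝ, IsOpen U ∧ Set.Icc θm θM ⊆ U ∧ ContDiffOn ℝ 2 Q₁ U)
    (heq₁ : ∀ θ ∈ Set.Icc θm θM, α * deriv (deriv Q₁) θ + r * a θ * Q₁ θ = H₁ * Q₁ θ)
    (hbm₁ : deriv Q₁ θm = 0) (hbM₁ : deriv Q₁ θM = 0)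
    (hpos₁ : ∀ θ ∈ Set.Icc θm θM, 0 < Q₁ θ)
    (hQ₂reg : ∃ U : Set ℝ, IsOpen U ∧ Set.Icc θm θM ⊆ U ∧ ContDiffOn ℝ 2 Q₂ U)
    (heq₂ : ∀ θ ∈ Set.Icc θm θM, α * deriv (deriv Q₂) θ + r * a θ * Q₂ θ = H₂ * Q₂ θ)
    (hbm₂ : deriv Q₂ θm = 0) (hbM₂ : deriv Q₂ θM = 0)
    (hpos₂ : ∀ θ ∈ Set.Icc θm θM, 0 < Q₂ θ) :
    H₁ = H₂ :=
  stmt_3_general θm θM α r H₁ H₂ a Q₁ Q₂ hθ hQ₁reg heq₁ hbm₁ hbM₁ hpos₁ hQ₂reg heq₂ hbm₂ hbM₂ hpos₂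
end

section
/- Suppose a is strictly concave on Θ and (H, Q) solves the Neumann spectral problem with Q strictly positive on Θ. Then Q attains its maximum over Θ at exactly one point: there exists a unique θ̄ ∈ Θ such that Q(θ̄) = max_{θ ∈ Θ} Q(θ). -/
/-!
At a maximum point `x` of `Q` we have `Q' x = 0` (either `x` is interior or the Neumann
condition applies) and `Q'' x ≤ 0`, so the equation `α Q'' = (H - r a) Q` with `Q > 0` forces
`H ≤ r a x`. If `x < y` were two maximum points, strict concavity of `a` would give `H < r a`
on `(x, y)`, hence `Q'' < 0` there, and `Q'` would be strictly decreasing on `[x, y]`,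
contradicting `Q' x = Q' y = 0`.
-/

open Set Filter Topology

theorem deriv_deriv_nonpos_of_isLocalMaxOn {f : ℝ → ℝ} {x : ℝ} {U : Set ℝ} (hU : IsOpen U)
    (hxU : x ∉ U) [(𝓝[U] x).NeBot] (hmax : IsLocalMaxOn f U x) (hd : deriv f x = 0)
    (hc : ContinuousAt f x) : deriv (deriv f) x ≤ 0 := by
  by_contra! hpos
  -- `f` also has a local minimum at `x`, so it is locally constant on `U` near `x`, whereas
  -- `f'` does not vanish on a punctured neighbourhood of `x`.
  have hconst : ∀ᶠ t in 𝓝[U] x, f t = f x :=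
    (hmax.and (nhdsWithin_le_nhds (isLocalMin_of_deriv_deriv_pos hpos hd hc))).mono
      fun _ h => le_antisymm h.1 h.2
  have hderiv : ∀ᶠ t in 𝓝[U] x, deriv f t = 0 := by
    rw [← eventually_eventually_nhdsWithin] at hconst
    filter_upwards [hconst, self_mem_nhdsWithin] with t ht htU
    rw [hU.nhdsWithin_eq htU] at ht
    simpa using EventuallyEq.deriv_eq (f := fun _ => f x) ht
  have hsign : ∀ᶠ t in 𝓝[U] x, SignType.sign (deriv f t) = SignType.sign (t - x) :=
    nhdsWithin_le_nhds (eventually_nhdsWithin_sign_eq_of_deriv_pos hpos hd)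
  obtain ⟨t, ht0, hsign, htU⟩ := (hderiv.and (hsign.and self_mem_nhdsWithin)).exists
  rw [ht0, sign_zero, eq_comm, sign_eq_zero_iff, sub_eq_zero] at hsign
  exact hxU (hsign ▸ htU)

theorem deriv_deriv_nonpos_of_isMaxOn_Icc {f : ℝ → ℝ} {a b x : ℝ} (hab : a < b)
    (hx : x ∈ Icc a b) (hmax : IsMaxOn f (Icc a b) x) (hd : deriv f x = 0)
    (hc : ContinuousAt f x) : deriv (deriv f) x ≤ 0 := by
  rcases hx.2.lt_or_eq with hxb | rfl
  · refine deriv_deriv_nonpos_of_isLocalMaxOn isOpen_Ioi (lt_irrefl x) ?_ hd hc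
    filter_upwards [Icc_mem_nhdsGT_of_mem ⟨hx.1, hxb⟩] with t ht using hmax ht
  · refine deriv_deriv_nonpos_of_isLocalMaxOn isOpen_Iio (lt_irrefl x) ?_ hd hc
    filter_upwards [Icc_mem_nhdsLT hab] with t ht using hmax ht

theorem deriv_eq_zero_of_isMaxOn_Icc {f : ℝ → ℝ} {a b x : ℝ} (hx : x ∈ Icc a b)
    (hmax : IsMaxOn f (Icc a b) x) (ha : deriv f a = 0) (hb : deriv f b = 0) :
    deriv f x = 0 := by
  rcases hx.1.eq_or_lt with rfl | hax
  · exact ha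
  rcases hx.2.lt_or_eq with hxb | rfl
  · exact (hmax.isLocalMax (Icc_mem_nhds hax hxb)).deriv_eq_zero
  · exact hb

section NeumannSpectral

variable {θm θM α r H x y : ℝ} {a Q : ℝ → ℝ}

theorem eigenvalue_le_of_isMaxOn (hθ : θm < θM) (hα : 0 < α)
    (heq : ∀ θ ∈ Icc θm θM, α * deriv (deriv Q) θ + r * a θ * Q θ = H * Q θ)
    (hpos : ∀ θ ∈ Icc θm θM, 0 < Q θ) (hx : x ∈ Icc θm θM) (hmax : IsMaxOn Q (Icc θm θM) x)
    (hd : deriv Q x = 0) (hc : ContinuousAt Q x) : H ≤ r * a x := by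
  have hQ'' := deriv_deriv_nonpos_of_isMaxOn_Icc hθ hx hmax hd hc
  have := heq x hx
  have := hpos x hx
  nlinarith

theorem eq_of_isMaxOn (hθ : θm < θM) (hα : 0 < α) (hr : 0 < r)
    (hconc : StrictConcaveOn ℝ (Icc θm θM) a)
    (heq : ∀ θ ∈ Icc θm θM, α * deriv (deriv Q) θ + r * a θ * Q θ = H * Q θ)
    (hbm : deriv Q θm = 0) (hbM : deriv Q θM = 0) (hpos : ∀ θ ∈ Icc θm θM, 0 < Q θ)
    (hQ : ∀ θ ∈ Icc θm θM, ContinuousAt Q θ) (hQ' : ContinuousOn (deriv Q) (Icc θm θM))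
    (hx : x ∈ Icc θm θM) (hy : y ∈ Icc θm θM)
    (hmx : IsMaxOn Q (Icc θm θM) x) (hmy : IsMaxOn Q (Icc θm θM) y) : x = y := by
  wlog hxy : x < y generalizing x y
  · rcases (not_lt.1 hxy).lt_or_eq with hyx | rfl
    · exact (this hy hx hmy hmx hyx).symm
    · rfl
  have hdx := deriv_eq_zero_of_isMaxOn_Icc hx hmx hbm hbM
  have hdy := deriv_eq_zero_of_isMaxOn_Icc hy hmy hbm hbM
  have hHx := eigenvalue_le_of_isMaxOn hθ hα heq hpos hx hmx hdx (hQ x hx)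
  have hHy := eigenvalue_le_of_isMaxOn hθ hα heq hpos hy hmy hdy (hQ y hy)
  have hsub : Icc x y ⊆ Icc θm θM := Icc_subset_Icc hx.1 hy.2
  have hQ''neg : ∀ t ∈ Ioo x y, deriv (deriv Q) t < 0 := by
    intro t ht
    have hat : min (a x) (a y) < a t :=
      hconc.lt_on_openSegment hx hy hxy.ne (by rwa [openSegment_eq_Ioo hxy])
    have htΘ : t ∈ Icc θm θM := hsub (Ioo_subset_Icc_self ht)
    have hHt : H < r * a t := by
      rcases min_lt_iff.1 hat with h | h <;> nlinarith
    have := heq t htΘ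
    have := hpos t htΘ
    nlinarith
  have hanti : StrictAntiOn (deriv Q) (Icc x y) :=
    strictAntiOn_of_deriv_neg (convex_Icc x y) (hQ'.mono hsub) (by rwa [interior_Icc])
  exact absurd (hdy.trans hdx.symm)
    (hanti (left_mem_Icc.2 hxy.le) (right_mem_Icc.2 hxy.le) hxy).ne

end NeumannSpectral

theorem stmt_5_general (θm θM α r H : ℝ) (a Q : ℝ → ℝ)
    (hθ : θm < θM) (hα : 0 < α) (hr : 0 < r)
    (hconc : StrictConcaveOn ℝ (Set.Icc θm θM) a)
    (hQreg : ∃ U : Set ℝ, IsOpen U ∧ Set.Icc θm θM ⊆ U ∧ ContDiffOn ℝ 2 Q U)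
    (heq : ∀ θ ∈ Set.Icc θm θM, α * deriv (deriv Q) θ + r * a θ * Q θ = H * Q θ)
    (hbm : deriv Q θm = 0) (hbM : deriv Q θM = 0)
    (hpos : ∀ θ ∈ Set.Icc θm θM, 0 < Q θ) :
    ∃! θbar : ℝ, θbar ∈ Set.Icc θm θM ∧ ∀ θ ∈ Set.Icc θm θM, Q θ ≤ Q θbar := by
  obtain ⟨U, hU, hΘU, hQU⟩ := hQreg
  have hQ : ∀ θ ∈ Icc θm θM, ContinuousAt Q θ := fun θ hθΘ =>
    hQU.continuousOn.continuousAt (hU.mem_nhds (hΘU hθΘ))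
  have hQ' : ContinuousOn (deriv Q) (Icc θm θM) :=
    (hQU.continuousOn_deriv_of_isOpen hU (by norm_num)).mono hΘU
  obtain ⟨θbar, hmem, hmax⟩ :=
    isCompact_Icc.exists_isMaxOn (nonempty_Icc.2 hθ.le) (continuousOn_of_forall_continuousAt hQ)
  exact ⟨θbar, ⟨hmem, fun θ hθΘ => hmax hθΘ⟩, fun z ⟨hz, hzmax⟩ =>
    eq_of_isMaxOn hθ hα hr hconc heq hbm hbM hpos hQ hQ' hz hmem hzmax hmax⟩

/-- If `a` is strictly concave on `Θ = [θm, θM]` and `(H, Q)` solves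
the Neumann spectral problem with `Q > 0` on `Θ`, then `Q` attains its maximum
over `Θ` at exactly one point. -/
theorem stmt_5 (θm θM α r H : ℝ) (a Q : ℝ → ℝ)
    (hθ : θm < θM) (hα : 0 < α) (hr : 0 < r)
    (ha : ContinuousOn a (Set.Icc θm θM))
    (hconc : StrictConcaveOn ℝ (Set.Icc θm θM) a)
    (hQreg : ∃ U : Set ℝ, IsOpen U ∧ Set.Icc θm θM ⊆ U ∧ ContDiffOn ℝ 2 Q U)
    (heq : ∀ θ ∈ Set.Icc θm θM, α * deriv (deriv Q) θ + r * a θ * Q θ = H * Q θ)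
    (hbm : deriv Q θm = 0) (hbM : deriv Q θM = 0)
    (hpos : ∀ θ ∈ Set.Icc θm θM, 0 < Q θ) :
    ∃! θbar : ℝ, θbar ∈ Set.Icc θm θM ∧ ∀ θ ∈ Set.Icc θm θM, Q θ ≤ Q θbar :=
  stmt_5_general θm θM α r H a Q hθ hα hr hconc hQreg heq hbm hbM hpos
end

section
/- Suppose (H, Q) solves the Neumann spectral problem with Q strictly positive on Θ, and suppose there is θ̂ ∈ Θ such that H − r a(θ) > 0 for all θ ∈ [θ_m, θ̂) and H − r a(θ) ≤ 0 for all θ ∈ [θ̂, θ_M]. Then Q is nondecreasing on Θ; in particular Q attains its maximum over Θ at θ_M. -/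
/-!
Dividing the equation by `α > 0`, `Q''` has the sign of `(H - r a) Q`, hence of `H - r a`.
So `Q'` is nondecreasing on `[θm, θ̂]` and nonincreasing on `[θ̂, θM]`; as it vanishes at
both ends, `Q' ≥ 0` on `Θ` and `Q` is nondecreasing.
-/

open Set

lemma monotoneOn_Icc_of_deriv_nonneg {f : ℝ → ℝ} {a b : ℝ}
    (hf : DifferentiableOn ℝ f (Icc a b)) (hf' : ∀ x ∈ Ioo a b, 0 ≤ deriv f x) :
    MonotoneOn f (Icc a b) :=
  monotoneOn_of_deriv_nonneg (convex_Icc a b) hf.continuousOn (hf.mono interior_subset)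
    (by rwa [interior_Icc])

lemma antitoneOn_Icc_of_deriv_nonpos {f : ℝ → ℝ} {a b : ℝ}
    (hf : DifferentiableOn ℝ f (Icc a b)) (hf' : ∀ x ∈ Ioo a b, deriv f x ≤ 0) :
    AntitoneOn f (Icc a b) :=
  antitoneOn_of_deriv_nonpos (convex_Icc a b) hf.continuousOn (hf.mono interior_subset)
    (by rwa [interior_Icc])

lemma nonneg_of_monotoneOn_of_antitoneOn {g : ℝ → ℝ} {a b c x : ℝ}
    (hmono : MonotoneOn g (Icc a c)) (hanti : AntitoneOn g (Icc c b))
    (ha : g a = 0) (hb : g b = 0) (hx : x ∈ Icc a b) : 0 ≤ g x := by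
  rcases le_or_gt x c with hxc | hcx
  · simpa [ha] using hmono (left_mem_Icc.2 (hx.1.trans hxc)) ⟨hx.1, hxc⟩ hx.1
  · simpa [hb] using hanti ⟨hcx.le, hx.2⟩ (right_mem_Icc.2 (hcx.le.trans hx.2)) hx.2

theorem stmt_6_general (θm θM α r H θhat : ℝ) (a Q : ℝ → ℝ)
    (hα : 0 < α)
    (hQreg : ∃ U : Set ℝ, IsOpen U ∧ Set.Icc θm θM ⊆ U ∧ ContDiffOn ℝ 2 Q U)
    (heq : ∀ θ ∈ Set.Icc θm θM, α * deriv (deriv Q) θ + r * a θ * Q θ = H * Q θ)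
    (hbm : deriv Q θm = 0) (hbM : deriv Q θM = 0)
    (hpos : ∀ θ ∈ Set.Icc θm θM, 0 < Q θ)
    (hθhat : θhat ∈ Set.Icc θm θM)
    (hsign₁ : ∀ θ ∈ Set.Ico θm θhat, 0 < H - r * a θ)
    (hsign₂ : ∀ θ ∈ Set.Icc θhat θM, H - r * a θ ≤ 0) :
    MonotoneOn Q (Set.Icc θm θM) ∧ ∀ θ ∈ Set.Icc θm θM, Q θ ≤ Q θM := by
  obtain ⟨U, hU, hΘU, hQ⟩ := hQreg
  have hQ_diff : DifferentiableOn ℝ Q (Icc θm θM) :=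
    (hQ.differentiableOn (by norm_num)).mono hΘU
  have hQ'_diff : DifferentiableOn ℝ (deriv Q) (Icc θm θM) :=
    ((hQ.deriv_of_isOpen hU (by norm_num)).differentiableOn one_ne_zero).mono hΘU
  have hQ'' : ∀ θ ∈ Icc θm θM, deriv (deriv Q) θ = (H - r * a θ) * Q θ / α := by
    intro θ hθ
    rw [eq_div_iff hα.ne']
    linarith [heq θ hθ]
  have hQ'_mono : MonotoneOn (deriv Q) (Icc θm θhat) :=
    monotoneOn_Icc_of_deriv_nonneg (hQ'_diff.mono (Icc_subset_Icc_right hθhat.2)) fun x hx => by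
      have hxΘ : x ∈ Icc θm θM := ⟨hx.1.le, hx.2.le.trans hθhat.2⟩
      rw [hQ'' x hxΘ]
      exact div_nonneg (mul_pos (hsign₁ x ⟨hx.1.le, hx.2⟩) (hpos x hxΘ)).le hα.le
  have hQ'_anti : AntitoneOn (deriv Q) (Icc θhat θM) :=
    antitoneOn_Icc_of_deriv_nonpos (hQ'_diff.mono (Icc_subset_Icc_left hθhat.1)) fun x hx => by
      have hxΘ : x ∈ Icc θm θM := ⟨hθhat.1.trans hx.1.le, hx.2.le⟩
      rw [hQ'' x hxΘ]
      exact div_nonpos_of_nonpos_of_nonneg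
        (mul_nonpos_of_nonpos_of_nonneg (hsign₂ x ⟨hx.1.le, hx.2.le⟩) (hpos x hxΘ).le) hα.le
  have hQ_mono : MonotoneOn Q (Icc θm θM) :=
    monotoneOn_Icc_of_deriv_nonneg hQ_diff fun x hx =>
      nonneg_of_monotoneOn_of_antitoneOn hQ'_mono hQ'_anti hbm hbM (Ioo_subset_Icc_self hx)
  exact ⟨hQ_mono, fun θ hθ =>
    hQ_mono hθ (right_mem_Icc.2 (hθhat.1.trans hθhat.2)) hθ.2⟩

/-- If `(H, Q)` solves the Neumann spectral problem with `Q > 0` on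
`Θ = [θm, θM]`, and `H - r a > 0` on `[θm, θ̂)` while `H - r a ≤ 0` on `[θ̂, θM]`
for some `θ̂ ∈ Θ`, then `Q` is nondecreasing on `Θ`; in particular its maximum
over `Θ` is attained at `θM`. -/
theorem stmt_6 (θm θM α r H θhat : ℝ) (a Q : ℝ → ℝ)
    (hθ : θm < θM) (hα : 0 < α) (hr : 0 < r)
    (ha : ContinuousOn a (Set.Icc θm θM))
    (hQreg : ∃ U : Set ℝ, IsOpen U ∧ Set.Icc θm θM ⊆ U ∧ ContDiffOn ℝ 2 Q U)
    (heq : ∀ θ ∈ Set.Icc θm θM, α * deriv (deriv Q) θ + r * a θ * Q θ = H * Q θ)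
    (hbm : deriv Q θm = 0) (hbM : deriv Q θM = 0)
    (hpos : ∀ θ ∈ Set.Icc θm θM, 0 < Q θ)
    (hθhat : θhat ∈ Set.Icc θm θM)
    (hsign₁ : ∀ θ ∈ Set.Ico θm θhat, 0 < H - r * a θ)
    (hsign₂ : ∀ θ ∈ Set.Icc θhat θM, H - r * a θ ≤ 0) :
    MonotoneOn Q (Set.Icc θm θM) ∧ ∀ θ ∈ Set.Icc θm θM, Q θ ≤ Q θM :=
  stmt_6_general θm θM α r H θhat a Q hα hQreg heq hbm hbM hpos hθhat hsign₁ hsign₂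
end

section
/- Define z : (0, ∞) → ℝ by z(t) = ε/(2√(α t)) + (r b_∞ ε²/(α γ))^{1/3}. Then z is differentiable on (0, ∞) and, for every t > 0, z'(t) + (2α/ε²) z(t)³ ≥ r b_∞/(2γ). (The barrier function z is a supersolution of the Bernstein-type ODE used in the Lipschitz estimate.) -/
/-! `a(t) = ε / (2√(αt))` solves the Bernstein ODE `a' + (2α/ε²) a³ = 0` exactly. Adding the
constant `C = (r b∞ ε² / (αγ))^{1/3}` can only increase the cubic term, since
`(a + C)³ ≥ a³ + C³` for `a, C ≥ 0`, and `(2α/ε²) C³ = 2 r b∞ / γ ≥ r b∞ / (2γ)`. -/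

open Real

lemma hasDerivAt_div_two_mul_sqrt_mul (ε α t : ℝ) (hαt : 0 < α * t) :
    HasDerivAt (fun u => ε / (2 * √(α * u))) (-(ε * α) / (4 * √(α * t) ^ 3)) t := by
  have hsqrt : HasDerivAt (fun u => √(α * u)) (α / (2 * √(α * t))) t := by
    simpa [mul_comm, div_eq_mul_inv] using
      ((hasDerivAt_id t).const_mul α).sqrt hαt.ne'
  have hs : 0 < √(α * t) := sqrt_pos.mpr hαt
  refine ((hasDerivAt_const t ε).div (hsqrt.const_mul 2) (by positivity)).congr_deriv ?_
  field_simp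
  ring

lemma div_two_mul_sqrt_solves_bernstein {ε α s : ℝ} (hs : s ≠ 0) :
    -(ε * α) / (4 * s ^ 3) + 2 * α / ε ^ 2 * (ε / (2 * s)) ^ 3 = 0 := by
  field_simp
  ring

lemma le_deriv_add_mul_add_const_pow_three {a a' C k : ℝ} (hsol : a' + k * a ^ 3 = 0)
    (ha : 0 ≤ a) (hC : 0 ≤ C) (hk : 0 ≤ k) : k * C ^ 3 ≤ a' + k * (a + C) ^ 3 := by
  have hcube : a ^ 3 + C ^ 3 ≤ (a + C) ^ 3 := pow_add_pow_le ha hC three_ne_zero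
  nlinarith [mul_le_mul_of_nonneg_left hcube hk]

lemma rpow_one_div_natCast_pow {x : ℝ} (hx : 0 ≤ x) {n : ℕ} (hn : n ≠ 0) :
    (x ^ ((1 : ℝ) / n)) ^ n = x := by
  simpa using rpow_inv_natCast_pow hx hn

/-- The barrier function `z(t) = ε/(2√(αt)) + (r b∞ ε²/(αγ))^{1/3}`
is differentiable on `(0, ∞)` and satisfies `z'(t) + (2α/ε²) z(t)³ ≥ r b∞/(2γ)`
for every `t > 0`. -/
theorem stmt_7 (ε α r b_inf γ : ℝ)
    (hε : 0 < ε) (hα : 0 < α) (hr : 0 < r) (hb : 0 < b_inf) (hγ : 0 < γ)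
    (z : ℝ → ℝ)
    (hz : ∀ t : ℝ, z t = ε / (2 * Real.sqrt (α * t)) +
      (r * b_inf * ε ^ 2 / (α * γ)) ^ ((1 : ℝ) / 3)) :
    ∀ t ∈ Set.Ioi (0 : ℝ), DifferentiableAt ℝ z t ∧
      deriv z t + (2 * α / ε ^ 2) * (z t) ^ 3 ≥ r * b_inf / (2 * γ) := by
  intro t (ht : 0 < t)
  set C := (r * b_inf * ε ^ 2 / (α * γ)) ^ ((1 : ℝ) / 3)
  have hαt : 0 < α * t := mul_pos hα ht
  have hderiv : HasDerivAt z (-(ε * α) / (4 * √(α * t) ^ 3)) t := by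
    rw [funext hz]
    exact (hasDerivAt_div_two_mul_sqrt_mul ε α t hαt).add_const C
  have hC3 : C ^ 3 = r * b_inf * ε ^ 2 / (α * γ) := by
    exact_mod_cast rpow_one_div_natCast_pow (by positivity) three_ne_zero
  have hsuper := le_deriv_add_mul_add_const_pow_three (C := C)
    (div_two_mul_sqrt_solves_bernstein (ε := ε) (α := α) (sqrt_pos.mpr hαt).ne')
    (by positivity) (rpow_nonneg (by positivity) _) (by positivity)
  have hconst : 2 * α / ε ^ 2 * C ^ 3 = 2 * (r * b_inf / γ) := by
    rw [hC3]
    field_simp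
  refine ⟨hderiv.differentiableAt, ?_⟩
  rw [hderiv.deriv, hz t]
  have hhalf : r * b_inf / (2 * γ) = r * b_inf / γ / 2 := by ring
  have hpos : 0 < r * b_inf / γ := by positivity
  linarith
end

section
/- Suppose n ≥ 0 everywhere, a(x, θ) ≤ a_∞ for all (x, θ), n satisfies the Neumann boundary conditions ∂_θ n(t, x, θ_m) = ∂_θ n(t, x, θ_M) = 0 for all (t, x), and n satisfies ε ∂_t n = ε² D ∂_{xx} n + α ∂_{θθ} n + r n (a(x, θ) − ρ(t, x)) for all (t, x) and all θ ∈ Θ, where ρ(t, x) := ∫_{θ_m}^{θ_M} n(t, x, θ) dθ. Assume moreover that at the point (t, x) differentiation under the integral sign is valid: ∂_t ρ(t, x) = ∫_{θ_m}^{θ_M} ∂_t n(t, x, θ) dθ and ∂_{xx} ρ(t, x) = ∫_{θ_m}^{θ_M} ∂_{xx} n(t, x, θ) dθ. Then ε ∂_t ρ(t, x) ≤ ε² D ∂_{xx} ρ(t, x) + r ρ(t, x) (a_∞ − ρ(t, x)). (The total density ρ is a subsolution of a Fisher-KPP equation.) -/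
/-!
Integrating the equation over `Θ`, the trait diffusion `α ∂_θθ n` contributes
`α (∂_θ n(θ_M) - ∂_θ n(θ_m)) = 0` by the Neumann conditions, and since `n ≥ 0` and `a ≤ a_∞`
the integrated reaction term is at most `r (a_∞ - ρ) ∫_Θ n = r ρ (a_∞ - ρ)`.
-/

open Set intervalIntegral
open MeasureTheory (volume)

section SecondDerivative

variable {f : ℝ → ℝ} {U : Set ℝ} {a b : ℝ}

theorem ContDiffOn.intervalIntegrable_deriv_deriv (hf : ContDiffOn ℝ 2 f U) (hU : IsOpen U)
    (hab : uIcc a b ⊆ U) : IntervalIntegrable (deriv (deriv f)) volume a b :=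
  (((hf.deriv_of_isOpen hU (by norm_num)).continuousOn_deriv_of_isOpen hU le_rfl).mono
    hab).intervalIntegrable

theorem ContDiffOn.integral_deriv_deriv_eq_sub (hf : ContDiffOn ℝ 2 f U) (hU : IsOpen U)
    (hab : uIcc a b ⊆ U) : ∫ θ in a..b, deriv (deriv f) θ = deriv f b - deriv f a := by
  have hf' := (hf.deriv_of_isOpen hU (by norm_num)).differentiableOn one_ne_zero
  exact integral_deriv_eq_sub (fun θ hθ => hf'.differentiableAt (hU.mem_nhds (hab hθ)))
    (hf.intervalIntegrable_deriv_deriv hU hab)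

end SecondDerivative

theorem integral_mul_le_of_nonneg_of_le {f g : ℝ → ℝ} {a b M : ℝ} (hab : a ≤ b)
    (hf : IntervalIntegrable f volume a b)
    (hfg : IntervalIntegrable (fun θ => f θ * g θ) volume a b)
    (hf0 : ∀ θ ∈ Icc a b, 0 ≤ f θ) (hg : ∀ θ ∈ Icc a b, g θ ≤ M) :
    ∫ θ in a..b, f θ * g θ ≤ M * ∫ θ in a..b, f θ := by
  rw [← integral_const_mul]
  refine integral_mono_on hab hfg (hf.const_mul M) fun θ hθ => ?_
  rw [mul_comm M]
  exact mul_le_mul_of_nonneg_left (hg θ hθ) (hf0 θ hθ)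

theorem integral_balance_le {u v w m g : ℝ → ℝ} {a b ε κ α r c ρ : ℝ} (hab : a ≤ b)
    (hr : 0 ≤ r) (hu : IntervalIntegrable u volume a b) (hv : IntervalIntegrable v volume a b)
    (hw : IntervalIntegrable w volume a b) (hm : IntervalIntegrable m volume a b)
    (hw0 : ∫ θ in a..b, w θ = 0) (hρ : ρ = ∫ θ in a..b, m θ)
    (hm0 : ∀ θ ∈ Icc a b, 0 ≤ m θ) (hg : ∀ θ ∈ Icc a b, g θ ≤ c)
    (hbal : ∀ θ ∈ Icc a b, ε * u θ = κ * v θ + α * w θ + r * m θ * (g θ - ρ)) :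
    ε * ∫ θ in a..b, u θ ≤ κ * (∫ θ in a..b, v θ) + r * ρ * (c - ρ) := by
  set R := fun θ => ε * u θ - κ * v θ - α * w θ with hR_def
  have hR : IntervalIntegrable R volume a b :=
    ((hu.const_mul ε).sub (hv.const_mul κ)).sub (hw.const_mul α)
  have hreaction : EqOn R (fun θ => m θ * (r * (g θ - ρ))) (uIcc a b) := fun θ hθ => by
    rw [uIcc_of_le hab] at hθ
    simp only [hR_def]
    linear_combination hbal θ hθ
  have hintR : ∫ θ in a..b, R θ = ε * (∫ θ in a..b, u θ) - κ * ∫ θ in a..b, v θ := by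
    rw [hR_def, integral_sub ((hu.const_mul ε).sub (hv.const_mul κ)) (hw.const_mul α),
      integral_sub (hu.const_mul ε) (hv.const_mul κ), integral_const_mul, integral_const_mul,
      integral_const_mul, hw0, mul_zero, sub_zero]
  have hbound := integral_mul_le_of_nonneg_of_le hab hm
    ((intervalIntegrable_congr (hreaction.mono uIoc_subset_uIcc)).1 hR) hm0
    (fun θ hθ => mul_le_mul_of_nonneg_left (sub_le_sub_right (hg θ hθ) ρ) hr)
  rw [← integral_congr hreaction, hintR, ← hρ] at hbound
  linarith

theorem stmt_15_general (θm θM ε D α r a_inf t x : ℝ)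
    (hθ : θm < θM) (hr : 0 < r)
    (a : ℝ → ℝ → ℝ) (n : ℝ → ℝ → ℝ → ℝ) (ρ : ℝ → ℝ → ℝ)
    (hρ : ∀ s y : ℝ, ρ s y = ∫ ϑ in θm..θM, n s y ϑ)
    (hn_nonneg : ∀ s y ϑ : ℝ, 0 ≤ n s y ϑ)
    (ha : ∀ y ϑ : ℝ, a y ϑ ≤ a_inf)
    (hreg : ∀ s y : ℝ, ∃ U : Set ℝ, IsOpen U ∧ Set.Icc θm θM ⊆ U ∧
      ContDiffOn ℝ 2 (n s y) U)
    (hcont_t : Continuous fun p : ℝ × ℝ × ℝ => deriv (fun s => n s p.2.1 p.2.2) p.1)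
    (hcont_xx : Continuous fun p : ℝ × ℝ × ℝ =>
      deriv (deriv fun y => n p.1 y p.2.2) p.2.1)
    (hneu : ∀ s y : ℝ, deriv (n s y) θm = 0 ∧ deriv (n s y) θM = 0)
    (hpde : ∀ s y : ℝ, ∀ ϑ ∈ Set.Icc θm θM,
      ε * deriv (fun s' => n s' y ϑ) s =
        ε ^ 2 * D * deriv (deriv fun y' => n s y' ϑ) y +
          α * deriv (deriv (n s y)) ϑ + r * n s y ϑ * (a y ϑ - ρ s y))
    (hswap_t : deriv (fun s => ρ s x) t = ∫ ϑ in θm..θM, deriv (fun s => n s x ϑ) t)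
    (hswap_xx : deriv (deriv fun y => ρ t y) x =
      ∫ ϑ in θm..θM, deriv (deriv fun y => n t y ϑ) x) :
    ε * deriv (fun s => ρ s x) t ≤
      ε ^ 2 * D * deriv (deriv fun y => ρ t y) x + r * ρ t x * (a_inf - ρ t x) := by
  obtain ⟨U, hU, hΘU, hn⟩ := hreg t x
  have hΘU' : uIcc θm θM ⊆ U := uIcc_of_le hθ.le ▸ hΘU
  have slice {F : ℝ × ℝ × ℝ → ℝ} (hF : Continuous F) :
      IntervalIntegrable (fun ϑ => F (t, x, ϑ)) volume θm θM :=
    (hF.comp (by fun_prop : Continuous fun ϑ : ℝ => (t, x, ϑ))).intervalIntegrable _ _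
  rw [hswap_t, hswap_xx]
  refine integral_balance_le hθ.le hr.le (slice hcont_t) (slice hcont_xx)
    (hn.intervalIntegrable_deriv_deriv hU hΘU') ((hn.continuousOn.mono hΘU').intervalIntegrable)
    ?_ (hρ t x) (fun ϑ _ => hn_nonneg t x ϑ) (fun ϑ _ => ha x ϑ) (hpde t x)
  rw [hn.integral_deriv_deriv_eq_sub hU hΘU', (hneu t x).1, (hneu t x).2, sub_self]

/-- If `n ≥ 0` solves the non-local model
`ε ∂ₜ n = ε² D ∂ₓₓ n + α ∂_θθ n + r n (a(x,θ) - ρ(t,x))` on `Θ = [θm, θM]` with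
Neumann boundary conditions in `θ`, `a ≤ a∞`, and differentiation under the
integral sign is valid at the point `(t,x)`, then the total density
`ρ(t,x) = ∫_Θ n dθ` satisfies the Fisher-KPP subsolution inequality
`ε ∂ₜ ρ ≤ ε² D ∂ₓₓ ρ + r ρ (a∞ - ρ)` at `(t,x)`. -/
theorem stmt_15 (θm θM ε D α r a_inf t x : ℝ)
    (hθ : θm < θM) (hε : 0 < ε) (hD : 0 < D) (hα : 0 < α) (hr : 0 < r)
    (a : ℝ → ℝ → ℝ) (n : ℝ → ℝ → ℝ → ℝ) (ρ : ℝ → ℝ → ℝ)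
    (hρ : ∀ s y : ℝ, ρ s y = ∫ ϑ in θm..θM, n s y ϑ)
    (hn_nonneg : ∀ s y ϑ : ℝ, 0 ≤ n s y ϑ)
    (ha : ∀ y ϑ : ℝ, a y ϑ ≤ a_inf)
    (hreg : ∀ s y : ℝ, ∃ U : Set ℝ, IsOpen U ∧ Set.Icc θm θM ⊆ U ∧
      ContDiffOn ℝ 2 (n s y) U)
    (hcont : Continuous fun p : ℝ × ℝ × ℝ => n p.1 p.2.1 p.2.2)
    (hcont_t : Continuous fun p : ℝ × ℝ × ℝ => deriv (fun s => n s p.2.1 p.2.2) p.1)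
    (hcont_xx : Continuous fun p : ℝ × ℝ × ℝ =>
      deriv (deriv fun y => n p.1 y p.2.2) p.2.1)
    (hneu : ∀ s y : ℝ, deriv (n s y) θm = 0 ∧ deriv (n s y) θM = 0)
    (hpde : ∀ s y : ℝ, ∀ ϑ ∈ Set.Icc θm θM,
      ε * deriv (fun s' => n s' y ϑ) s =
        ε ^ 2 * D * deriv (deriv fun y' => n s y' ϑ) y +
          α * deriv (deriv (n s y)) ϑ + r * n s y ϑ * (a y ϑ - ρ s y))
    (hswap_t : deriv (fun s => ρ s x) t = ∫ ϑ in θm..θM, deriv (fun s => n s x ϑ) t)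
    (hswap_xx : deriv (deriv fun y => ρ t y) x =
      ∫ ϑ in θm..θM, deriv (deriv fun y => n t y ϑ) x) :
    ε * deriv (fun s => ρ s x) t ≤
      ε ^ 2 * D * deriv (deriv fun y => ρ t y) x + r * ρ t x * (a_inf - ρ t x) :=
  stmt_15_general θm θM ε D α r a_inf t x hθ hr a n ρ hρ hn_nonneg ha hreg hcont_t hcont_xx hneu
    hpde hswap_t hswap_xx
end
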